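/- Let κ be a weakly compact cardinal. Then every κ-compact κ-ultrametric space (K,u) of weight at most κ can be embedded into 2^κ (equipped with the topology induced by the κ-ultrametric u(a,b) = sup{α < κ : a↾α = b↾α}) in such a way that its image is a nowhere dense subset of 2^κ. -/

import Mathlib

open Set Function

universe u v

/-- The closed ball of radius `α` and center `x` in an ordinal-valued ultrametric space:
`B_α(x) = {y | u x y ≥ α}`. -/
def Ball {X : Type u} (u : X → X → Ordinal) (α : Ordinal) (x : X) : Set X :=
  {y | α ≤ u x y}

/-- `u` is a `γ`-ultrametric on `X`: it takes values in `γ + 1` (i.e. values `≤ γ`),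
`u x y = γ` iff `x = y`, the ultrametric triangle law, and symmetry. -/
structure IsUltrametric {X : Type u} (γ : Ordinal) (u : X → X → Ordinal) : Prop where
  le_gamma : ∀ x y, u x y ≤ γ
  eq_gamma_iff : ∀ x y, u x y = γ ↔ x = y
  triangle : ∀ x y z, min (u y x) (u x z) ≤ u y z
  symm : ∀ x y, u x y = u y x

/-- The topology induced by a `γ`-ultrametric: the closed balls `B_α(x)`, `α < γ`,
form a base. -/
def ballTopology {X : Type u} (γ : Ordinal) (u : X → X → Ordinal) : TopologicalSpace X :=
  TopologicalSpace.generateFrom {s : Set X | ∃ x α, α < γ ∧ s = Ball u α x}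

/-- `f` is uniformly continuous from the `γX`-ultrametric space `(X, u)` to the
`γY`-ultrametric space `(Y, d)`. -/
def UnifCont {X : Type u} {Y : Type v} (γX γY : Ordinal)
    (u : X → X → Ordinal) (d : Y → Y → Ordinal) (f : X → Y) : Prop :=
  ∀ ε < γY, ∃ δ < γX, ∀ a b, δ ≤ u a b → ε ≤ d (f a) (f b)

/-- A discrete set regarded as a `γ`-ultrametric space. -/
noncomputable def discreteUltra {X : Type u} (γ : Ordinal) (a b : X) : Ordinal :=
  @ite _ (a = b) (Classical.propDecidable _) γ 0

/-- `A` is uniformly nowhere dense in the `γ`-ultrametric space `(X, u)`. -/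
def UnifNwd {X : Type u} (γ : Ordinal) (u : X → X → Ordinal) (A : Set X) : Prop :=
  ∀ α < γ, ∃ β, α < β ∧ β < γ ∧ ∀ b : X, ∃ a ∈ Ball u α b, Ball u β a ∩ A = ∅

/-- The space `κ^λ` of functions from (the ordinals below) `λ` to (the ordinals below) `κ`. -/
def funSpace (κ lam : Cardinal.{0}) : Type 1 :=
  ↥(Set.Iio lam.ord) → ↥(Set.Iio κ.ord)

/-- The canonical `λ`-ultrametric on `κ^λ`: `u(a,b) = sup {α < λ : a↾α = b↾α}`. -/
noncomputable def funUltra (κ lam : Cardinal.{0}) (a b : funSpace κ lam) : Ordinal :=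
  sSup {α : Ordinal | α < lam.ord ∧ ∀ β : ↥(Set.Iio lam.ord), (β : Ordinal) < α → a β = b β}

noncomputable instance (κ lam : Cardinal.{0}) : TopologicalSpace (funSpace κ lam) :=
  ballTopology lam.ord (funUltra κ lam)

/-- The space `X` with topology `t` has weight (least cardinality of a base) at most `c`. -/
def WeightLE (X : Type u) (t : TopologicalSpace X) (c : Cardinal.{0}) : Prop :=
  ∃ B : Set (Set X), t.IsTopologicalBasis B ∧ Cardinal.mk B ≤ Cardinal.lift.{u} c

/-- The generalized Cantor space `2^κ` of functions from (the ordinals below) `κ` to `{0,1}`. -/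
def cantor (κ : Cardinal.{0}) : Type 1 := ↥(Set.Iio κ.ord) → Bool

/-- The canonical `κ`-ultrametric on `2^κ`: `u(a,b) = sup {α < κ : a↾α = b↾α}`. -/
noncomputable def cantorUltra (κ : Cardinal.{0}) (a b : cantor κ) : Ordinal :=
  sSup {α : Ordinal | α < κ.ord ∧ ∀ β : ↥(Set.Iio κ.ord), (β : Ordinal) < α → a β = b β}

noncomputable instance (κ : Cardinal.{0}) : TopologicalSpace (cantor κ) :=
  ballTopology κ.ord (cantorUltra κ)

/-- `κ` is weakly compact: it is uncountable and has the Ramsey property `κ → (κ)²`. -/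
def WeaklyCompact (κ : Cardinal.{0}) : Prop :=
  Cardinal.aleph0 < κ ∧
  ∀ f : ↥(Set.Iio κ.ord) → ↥(Set.Iio κ.ord) → Bool,
    ∃ (i : Bool) (A : Set ↥(Set.Iio κ.ord)), Cardinal.mk A = Cardinal.lift.{1} κ ∧
      ∀ a ∈ A, ∀ b ∈ A, a < b → f a b = i

/-- A space is `κ`-compact if every open cover has a subcover of size `< κ`. -/
def KappaCompact (X : Type u) (t : TopologicalSpace X) (κ : Cardinal.{0}) : Prop :=
  ∀ C : Set (Set X), (∀ s ∈ C, t.IsOpen s) → ⋃₀ C = Set.univ →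
    ∃ D ⊆ C, Cardinal.mk D < Cardinal.lift.{u} κ ∧ ⋃₀ D = Set.univ

/-!
For each `β < κ` the balls of radius `β` partition `K`, so by `κ`-compactness there are fewer
than `κ` of them, and there are at most `κ` pairs `(β, B)` with `B` a ball of radius `β`.
Code these pairs injectively by limit ordinals `c (β, B) < κ` and send `x` to the point of `2^κ`
that is `1` exactly at the positions `c (β, B)` with `x ∈ B`. Since `κ` is regular (being weakly
compact), only fewer than `κ` pairs are coded below any given position and only fewer than `κ`
positions code pairs of radius at most any given `α`; this makes the map and its inverse
uniformly continuous, hence an embedding. Its image consists of points vanishing at every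
successor position, a closed set with empty interior.
-/

open Cardinal Ordinal TopologicalSpace Filter Topology

namespace IsUltrametric

variable {X : Type u} {γ α : Ordinal} {u : X → X → Ordinal}

theorem mem_ball_self (hu : IsUltrametric γ u) (hα : α ≤ γ) (x : X) : x ∈ Ball u α x := by
  rwa [Ball, mem_ofPred_eq, (hu.eq_gamma_iff x x).2 rfl]

theorem ball_eq_of_mem (hu : IsUltrametric γ u) {x y : X} (h : y ∈ Ball u α x) :
    Ball u α x = Ball u α y := by
  ext z
  constructor
  · intro hz
    exact (le_min (hu.symm y x ▸ h) hz).trans (hu.triangle x y z)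
  · intro hz
    exact (le_min h hz).trans (hu.triangle y x z)

theorem mem_ball_iff_of_le (hu : IsUltrametric γ u) {x y : X} (h : α ≤ u x y) (z : X) :
    x ∈ Ball u α z ↔ y ∈ Ball u α z := by
  have key : ∀ {x y : X}, α ≤ u x y → x ∈ Ball u α z → y ∈ Ball u α z := fun hxy hx =>
    (hu.ball_eq_of_mem hx).symm ▸ hxy
  exact ⟨key h, key (hu.symm x y ▸ h)⟩

theorem isTopologicalBasis (hu : IsUltrametric γ u) (hγ : 0 < γ) :
    @IsTopologicalBasis X (ballTopology γ u) {s | ∃ x α, α < γ ∧ s = Ball u α x} := by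
  let _ := ballTopology γ u
  refine .mk ?_ ?_ rfl
  · rintro _ ⟨x, α, hα, rfl⟩ _ ⟨y, β, hβ, rfl⟩ z ⟨hzx, hzy⟩
    refine ⟨Ball u (max α β) z, ⟨z, max α β, max_lt hα hβ, rfl⟩,
      hu.mem_ball_self (max_lt hα hβ).le z, ?_⟩
    rw [hu.ball_eq_of_mem hzx, hu.ball_eq_of_mem hzy]
    exact fun w hw => ⟨(le_max_left α β).trans hw, (le_max_right α β).trans hw⟩
  · exact eq_univ_of_forall fun x =>
      ⟨Ball u 0 x, ⟨x, 0, hγ, rfl⟩, hu.mem_ball_self hγ.le x⟩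

theorem nhds_hasBasis (hu : IsUltrametric γ u) (hγ : 0 < γ) (x : X) :
    let _ := ballTopology γ u
    (𝓝 x).HasBasis (· < γ) (Ball u · x) := by
  let _ := ballTopology γ u
  refine (hu.isTopologicalBasis hγ).nhds_hasBasis.to_hasBasis ?_ ?_
  · rintro _ ⟨⟨y, α, hα, rfl⟩, hx⟩
    exact ⟨α, hα, (hu.ball_eq_of_mem hx).ge⟩
  · exact fun α hα => ⟨Ball u α x, ⟨⟨x, α, hα, rfl⟩, hu.mem_ball_self hα.le x⟩, le_rfl⟩

theorem isEmbedding {Y : Type v} {γ' : Ordinal} {d : Y → Y → Ordinal}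
    (hu : IsUltrametric γ u) (hd : IsUltrametric γ' d) (hγ : Order.IsSuccLimit γ)
    (hγ' : 0 < γ')
    {f : X → Y} (hf : UnifCont γ γ' u d f)
    (hf' : UnifCont γ' γ (fun x y => d (f x) (f y)) u id) :
    @Topology.IsEmbedding X Y (ballTopology γ u) (ballTopology γ' d) f := by
  let _ := ballTopology γ u
  let _ := ballTopology γ' d
  refine ⟨isInducing_iff_nhds.2 fun x => ?_, fun x y hxy => ?_⟩
  · refine (hu.nhds_hasBasis hγ.bot_lt x).ext
      ((hd.nhds_hasBasis hγ' (f x)).comap f) ?_ ?_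
    · intro α hα
      obtain ⟨H, hH, hHα⟩ := hf' α hα
      exact ⟨H, hH, fun y hy => hHα x y hy⟩
    · intro ε hε
      obtain ⟨δ, hδ, hδε⟩ := hf ε hε
      exact ⟨δ, hδ, fun y hy => hδε x y hy⟩
  · by_contra hne
    have hlt : u x y < γ := (hu.le_gamma x y).lt_of_ne (mt (hu.eq_gamma_iff x y).1 hne)
    obtain ⟨H, hH, hHα⟩ := hf' _ (hγ.succ_lt hlt)
    have hfar := hHα x y (by
      change H ≤ d (f x) (f y)
      rw [hxy, (hd.eq_gamma_iff _ _).2 rfl]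
      exact hH.le)
    exact (Order.lt_succ (u x y)).not_ge hfar

theorem mk_range_ball_lt {κ : Cardinal.{0}} (hu : IsUltrametric γ u)
    (hc : KappaCompact X (ballTopology γ u) κ) {β : Ordinal} (hβ : β < γ) :
    #(range (Ball u β)) < Cardinal.lift.{u} κ := by
  obtain ⟨D, hDC, hD, hDcover⟩ := hc (range (Ball u β))
    (by rintro _ ⟨x, rfl⟩; exact isOpen_generateFrom_of_mem ⟨x, β, hβ, rfl⟩)
    (eq_univ_of_forall fun x => ⟨Ball u β x, mem_range_self x, hu.mem_ball_self hβ.le x⟩)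
  -- balls of a fixed radius partition `X`, so a subcover by them must contain all of them
  suffices range (Ball u β) ⊆ D from (mk_le_mk_of_subset this).trans_lt hD
  rintro _ ⟨x, rfl⟩
  obtain ⟨_, hd, hx⟩ := mem_sUnion.1 (hDcover ▸ mem_univ x)
  obtain ⟨y, rfl⟩ := hDC hd
  rwa [← hu.ball_eq_of_mem hx]

end IsUltrametric

theorem Cardinal.IsRegular.exists_lt_ord_forall_lt {κ : Cardinal.{v}} (hκ : κ.IsRegular)
    {ι : Type w} (f : ι → Ordinal.{v}) (hι : Cardinal.lift.{v} #ι < Cardinal.lift.{w} κ)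
    (hf : ∀ i, f i < κ.ord) : ∃ δ < κ.ord, ∀ i, f i < δ := by
  have hbdd : BddAbove (range fun i => f i + 1) :=
    ⟨κ.ord, by rintro _ ⟨i, rfl⟩; exact Order.add_one_le_of_lt (hf i)⟩
  refine ⟨⨆ i, f i + 1, lift_iSup_add_one_lt_of_lt_cof ?_ hf, fun i =>
    (Order.lt_add_one_iff.2 le_rfl).trans_le (le_ciSup hbdd i)⟩
  rwa [← lift_cof, hκ.cof_ord]

theorem mk_Iic_lt_lift {κ : Cardinal.{0}} (hκ : ℵ₀ ≤ κ) (a : Iio κ.ord) :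
    #(Iic a) < Cardinal.lift.{1} κ := by
  have hmk : #(Iio κ.ord) = Cardinal.lift.{1} κ := by
    rw [Cardinal.mk_Iio_ordinal, card_ord]
  rw [← hmk]
  exact Cardinal.mk_Iic_lt a (by rw [hmk, ← lift_ord, type_lt_Iio])
    (by rw [hmk]; simpa using hκ)

theorem WeaklyCompact.exists_const_or_injOn {κ : Cardinal.{0}} (hκ : WeaklyCompact κ)
    {β : Type w} (p : Iio κ.ord → β) :
    ∃ A : Set (Iio κ.ord), #A = Cardinal.lift.{1} κ ∧
      ((∀ a ∈ A, ∀ b ∈ A, p a = p b) ∨ InjOn p A) := by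
  classical
  obtain ⟨i, A, hA, hhom⟩ := hκ.2 fun a b => decide (p a = p b)
  refine ⟨A, hA, ?_⟩
  cases i
  · refine .inr fun a ha b hb hab => ?_
    by_contra hne
    rcases lt_or_gt_of_ne hne with h | h
    · simpa [hab] using hhom a ha b hb h
    · simpa [hab] using hhom b hb a ha h
  · refine .inl fun a ha b hb => ?_
    rcases lt_trichotomy a b with h | rfl | h
    · simpa using hhom a ha b hb h
    · rfl
    · simpa [eq_comm] using hhom b hb a ha h

theorem WeaklyCompact.isRegular {κ : Cardinal.{0}} (hκ : WeaklyCompact κ) : κ.IsRegular := by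
  refine ⟨hκ.1.le, ?_⟩
  rw [← Cardinal.lift_le.{1}, Ordinal.lift_cof, ← Ordinal.cof_Iio, Order.le_cof_iff]
  intro s hs
  choose p hp using hs
  obtain ⟨A, hA, hconst | hinj⟩ := hκ.exists_const_or_injOn fun x => (⟨p x, (hp x).1⟩ : s)
  · exfalso
    obtain ⟨a, ha⟩ : A.Nonempty := by
      rw [← Set.nonempty_coe_sort, ← Cardinal.mk_ne_zero_iff, hA]
      simpa using (aleph0_pos.trans hκ.1).ne'
    have hbdd : A ⊆ Iic (p a) := fun b hb =>
      (hp b).2.trans_eq (congrArg Subtype.val (hconst b hb a ha))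
    exact ((mk_le_mk_of_subset hbdd).trans_lt (mk_Iic_lt_lift hκ.1.le (p a))).ne hA
  · exact hA ▸ Cardinal.mk_le_of_injective hinj.injective

theorem exists_injective_isSuccPrelimit {κ : Cardinal.{0}} (hκ : ℵ₀ < κ) {T : Type w}
    (hT : Cardinal.lift.{1} #T ≤ Cardinal.lift.{max 1 w} κ) :
    ∃ c : T → Iio κ.ord, Injective c ∧ ∀ t, Order.IsSuccPrelimit (c t : Ordinal) := by
  obtain ⟨e⟩ : Nonempty (T ↪ Iio κ.ord) := by
    rwa [← Cardinal.lift_mk_le', Cardinal.mk_Iio_ordinal, card_ord, Cardinal.lift_lift]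
  have hω : ω < κ.ord := Cardinal.lt_ord.2 (by simpa using hκ)
  refine ⟨fun t => ⟨ω * e t, isPrincipal_mul_ord hκ.le hω (e t).2⟩, fun t t' h => ?_,
    fun t => isSuccPrelimit_mul_left isSuccLimit_omega0⟩
  exact e.injective (Subtype.ext (mul_left_cancel₀ omega0_ne_zero (congrArg Subtype.val h)))

section Cantor

variable {κ : Cardinal.{0}}

theorem cantorUltra_le_of_ne {a b : cantor κ} {p : Iio κ.ord} (h : a p ≠ b p) :
    cantorUltra κ a b ≤ p :=
  csSup_le' fun _ hα => not_lt.1 fun hp => h (hα.2 p hp)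

theorem le_cantorUltra_iff {a b : cantor κ} {α : Ordinal} (hα : α < κ.ord) :
    α ≤ cantorUltra κ a b ↔ ∀ β : Iio κ.ord, (β : Ordinal) < α → a β = b β := by
  refine ⟨fun h β hβ => ?_, fun h => le_csSup ⟨κ.ord, fun _ hγ => hγ.1.le⟩ ⟨hα, h⟩⟩
  by_contra hne
  exact (h.trans (cantorUltra_le_of_ne hne)).not_gt hβ

theorem cantorUltra_le_ord (a b : cantor κ) : cantorUltra κ a b ≤ κ.ord :=
  csSup_le' fun _ hα => hα.1.le

theorem isUltrametric_cantorUltra (hκ : ℵ₀ ≤ κ) : IsUltrametric κ.ord (cantorUltra κ) := by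
  have hlim := isSuccLimit_ord hκ
  refine ⟨cantorUltra_le_ord, fun a b => ⟨fun h => funext fun p => ?_, ?_⟩, fun a b c => ?_,
    fun a b => ?_⟩
  · have hp := hlim.succ_lt p.2
    exact (le_cantorUltra_iff hp).1 (by rw [h]; exact hp.le) p (Order.lt_succ _)
  · rintro rfl
    refine (cantorUltra_le_ord a a).antisymm (le_of_forall_lt fun α hα => ?_)
    exact Order.succ_le_iff.1 ((le_cantorUltra_iff (hlim.succ_lt hα)).2 fun _ _ => rfl)
  · refine le_of_forall_lt fun α hα => Order.succ_le_iff.1 ?_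
    have hα' : Order.succ α < κ.ord :=
      hlim.succ_lt (hα.trans_le ((min_le_left _ _).trans (cantorUltra_le_ord b a)))
    rw [lt_min_iff, ← Order.succ_le_iff, ← Order.succ_le_iff, le_cantorUltra_iff hα',
      le_cantorUltra_iff hα'] at hα
    exact (le_cantorUltra_iff hα').2 fun β hβ => (hα.1 β hβ).trans (hα.2 β hβ)
  · simp only [cantorUltra, eq_comm]

theorem continuous_cantor_apply (hκ : ℵ₀ ≤ κ) (p : Iio κ.ord) :
    Continuous fun a : cantor κ => a p := by
  have hp : Order.succ (p : Ordinal) < κ.ord := (isSuccLimit_ord hκ).succ_lt p.2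
  refine continuous_discrete_rng.2 fun b => isOpen_iff_mem_nhds.2 fun a (ha : a p = b) => ?_
  refine ((isUltrametric_cantorUltra hκ).nhds_hasBasis (isSuccLimit_ord hκ).bot_lt a).mem_iff.2
    ⟨_, hp, fun a' ha' => ?_⟩
  exact ((le_cantorUltra_iff hp).1 ha' p (Order.lt_succ _)).symm.trans ha

theorem isNowhereDense_setOf_forall_eq_false (hκ : ℵ₀ ≤ κ) {P : Set (Iio κ.ord)}
    (hP : IsCofinal P) : IsNowhereDense {a : cantor κ | ∀ p ∈ P, a p = false} := by
  have hclosed : IsClosed {a : cantor κ | ∀ p ∈ P, a p = false} := by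
    simp only [ofPred_forall]
    exact isClosed_biInter fun p _ => isClosed_eq (continuous_cantor_apply hκ p) continuous_const
  rw [hclosed.isNowhereDense_iff, eq_empty_iff_forall_notMem]
  intro a ha
  obtain ⟨α, hα, hball⟩ := ((isUltrametric_cantorUltra hκ).nhds_hasBasis
    (isSuccLimit_ord hκ).bot_lt a).mem_iff.1 (mem_interior_iff_mem_nhds.1 ha)
  obtain ⟨p, hpP, hαp⟩ := hP ⟨α, hα⟩
  have hmem : update a p true ∈ Ball (cantorUltra κ) α a :=
    (le_cantorUltra_iff hα).2 fun β hβ =>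
      (update_of_ne (show β < p from hβ.trans_le hαp).ne _ _).symm
  exact Bool.noConfusion ((update_self p true a).symm.trans (hball hmem p hpP))

end Cantor

section BallCode

variable {κ : Cardinal.{0}} {K : Type u} {d : K → K → Ordinal.{0}}

abbrev LevelBall (κ : Cardinal.{0}) (d : K → K → Ordinal.{0}) : Type (max 1 u) :=
  Σ β : Iio κ.ord, range (Ball d β)

-- coordinate `c (β, B)` of `ballCode c x` records whether `x ∈ B`; all other coordinates are `0`
open Classical in
noncomputable def ballCode (c : LevelBall κ d → Iio κ.ord) (x : K) : cantor κ :=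
  extend c (fun t => decide (x ∈ (t.2 : Set K))) fun _ => false

variable {c : LevelBall κ d → Iio κ.ord}

theorem ballCode_apply_eq_true (hc : Injective c) {x : K} {t : LevelBall κ d} :
    ballCode c x (c t) = true ↔ x ∈ (t.2 : Set K) := by
  simp [ballCode, hc.extend_apply]

theorem ballCode_apply_of_notMem {p : Iio κ.ord} (hp : p ∉ range c) (x : K) :
    ballCode c x p = false :=
  extend_apply' _ _ _ hp

theorem ballCode_apply_eq (hd : IsUltrametric κ.ord d) (hc : Injective c) {x y : K}
    {p : Iio κ.ord} (h : ∀ t, c t = p → (t.1 : Ordinal) ≤ d x y) :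
    ballCode c x p = ballCode c y p := by
  by_cases hp : p ∈ range c
  · obtain ⟨t, rfl⟩ := hp
    obtain ⟨z, hz⟩ := t.2.2
    rw [Bool.eq_iff_iff, ballCode_apply_eq_true hc, ballCode_apply_eq_true hc, ← hz]
    exact hd.mem_ball_iff_of_le (h t rfl) z
  · rw [ballCode_apply_of_notMem hp, ballCode_apply_of_notMem hp]

theorem mk_levelBall_le (hκ : ℵ₀ ≤ κ)
    (hballs : ∀ β < κ.ord, #(range (Ball d β)) < Cardinal.lift.{u} κ) :
    Cardinal.lift.{1} #(LevelBall κ d) ≤ Cardinal.lift.{max 1 u} κ := by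
  calc Cardinal.lift.{1} #(LevelBall κ d)
      ≤ Cardinal.lift.{1} (sum fun _ : Iio κ.ord => Cardinal.lift.{u} κ) := by
        rw [mk_sigma]
        exact Cardinal.lift_le.2 (sum_le_sum _ _ fun β => (hballs β β.2).le)
    _ = Cardinal.lift.{max 1 u} κ := by
        rw [sum_const, Cardinal.mk_Iio_ordinal, card_ord]
        simp only [Cardinal.lift_lift, ← Cardinal.lift_mul, mul_eq_self hκ]

theorem exists_lt_ord_forall_code_lt (hκ : κ.IsRegular)
    (hballs : ∀ β < κ.ord, #(range (Ball d β)) < Cardinal.lift.{u} κ)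
    (c : LevelBall κ d → Iio κ.ord) {α : Ordinal} (hα : α < κ.ord) :
    ∃ H < κ.ord, ∀ t : LevelBall κ d, (t.1 : Ordinal) ≤ α → (c t : Ordinal) < H := by
  have hlevel (β : Iio κ.ord) : ∃ H < κ.ord, ∀ B, (c ⟨β, B⟩ : Ordinal) < H :=
    hκ.exists_lt_ord_forall_lt _ (by simpa using hballs β β.2) fun B => (c ⟨β, B⟩).2
  choose H hH hcH using hlevel
  obtain ⟨H', hH', hHH'⟩ := hκ.exists_lt_ord_forall_lt
    (fun β : Iic (⟨α, hα⟩ : Iio κ.ord) => H β) (by simpa using mk_Iic_lt_lift hκ.aleph0_le _)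
    fun β => hH β
  exact ⟨H', hH', fun t ht => (hcH t.1 t.2).trans (hHH' ⟨t.1, ht⟩)⟩

theorem unifCont_ballCode (hκ : κ.IsRegular) (hd : IsUltrametric κ.ord d) (hc : Injective c) :
    UnifCont κ.ord κ.ord d (cantorUltra κ) (ballCode c) := by
  intro ρ hρ
  have hcard : Cardinal.lift.{0} #{t // (c t : Ordinal) < ρ} < Cardinal.lift.{max 1 u} κ := by
    have hinj : Injective fun t : {t // (c t : Ordinal) < ρ} => (⟨c t, t.2⟩ : Iio ρ) :=
      fun t t' h => Subtype.ext (hc (Subtype.ext (congrArg Subtype.val h :)))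
    rw [Cardinal.lift_uzero]
    refine (Cardinal.lift_lt.{max 1 u, 1}).1
      ((Cardinal.lift_mk_le_lift_mk_of_injective hinj).trans_lt ?_)
    rw [Cardinal.mk_Iio_ordinal, Cardinal.lift_lift, Cardinal.lift_lift, Cardinal.lift_lt]
    exact Cardinal.lt_ord.1 hρ
  obtain ⟨δ, hδ, hlt⟩ := hκ.exists_lt_ord_forall_lt
    (fun t : {t // (c t : Ordinal) < ρ} => (t.1.1 : Ordinal)) hcard fun t => t.1.1.2
  exact ⟨δ, hδ, fun x y hxy => (le_cantorUltra_iff hρ).2 fun q hq =>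
    ballCode_apply_eq hd hc fun t ht => (hlt ⟨t, ht ▸ hq⟩).le.trans hxy⟩

theorem unifCont_id_ballCode (hκ : κ.IsRegular) (hd : IsUltrametric κ.ord d)
    (hballs : ∀ β < κ.ord, #(range (Ball d β)) < Cardinal.lift.{u} κ) (hc : Injective c) :
    UnifCont κ.ord κ.ord (fun x y => cantorUltra κ (ballCode c x) (ballCode c y)) d id := by
  intro α hα
  obtain ⟨H, hH, hcH⟩ := exists_lt_ord_forall_code_lt hκ hballs c hα
  refine ⟨H, hH, fun x y hxy => not_lt.1 fun hlt => ?_⟩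
  have hβ : Order.succ (d x y) < κ.ord := (isSuccLimit_ord hκ.aleph0_le).succ_lt (hlt.trans hα)
  -- the ball of radius `d x y + 1` around `x` separates `x` from `y`
  let t : LevelBall κ d := ⟨⟨_, hβ⟩, ⟨_, mem_range_self x⟩⟩
  have hne : ballCode c x (c t) ≠ ballCode c y (c t) := fun h =>
    (Order.lt_succ (d x y)).not_ge <| (ballCode_apply_eq_true hc).1 <|
      h ▸ (ballCode_apply_eq_true hc).2 (hd.mem_ball_self hβ.le x)
  exact (hxy.trans (cantorUltra_le_of_ne hne)).not_gt (hcH t (Order.succ_le_of_lt hlt))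

end BallCode

theorem exists_isEmbedding_cantor_isNowhereDense {κ : Cardinal.{0}} (hκ : κ.IsRegular)
    (hℵ : ℵ₀ < κ) {K : Type u} {d : K → K → Ordinal.{0}} (hd : IsUltrametric κ.ord d)
    (hballs : ∀ β < κ.ord, #(range (Ball d β)) < Cardinal.lift.{u} κ) :
    ∃ η : K → cantor κ,
      @Topology.IsEmbedding K (cantor κ) (ballTopology κ.ord d)
        (ballTopology κ.ord (cantorUltra κ)) η ∧
      IsNowhereDense (range η) := by
  have hlim := isSuccLimit_ord hκ.aleph0_le
  obtain ⟨c, hc, hcode⟩ :=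
    exists_injective_isSuccPrelimit hℵ (mk_levelBall_le hκ.aleph0_le hballs)
  refine ⟨ballCode c, hd.isEmbedding (isUltrametric_cantorUltra hκ.aleph0_le) hlim hlim.bot_lt
    (unifCont_ballCode hκ hd hc) (unifCont_id_ballCode hκ hd hballs hc), ?_⟩
  have hsucc : IsCofinal (range c)ᶜ := fun p =>
    ⟨⟨_, hlim.succ_lt p.2⟩, fun ⟨t, ht⟩ => Order.not_isSuccPrelimit_succ (p : Ordinal) <| by
      simpa [ht] using hcode t, Order.le_succ (p : Ordinal)⟩
  refine (isNowhereDense_setOf_forall_eq_false hκ.aleph0_le hsucc).mono ?_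
  rintro _ ⟨x, rfl⟩ p hp
  exact ballCode_apply_of_notMem hp x

theorem stmt17_general (κ : Cardinal.{0}) (hκ : WeaklyCompact κ)
    (K : Type u) (uK : K → K → Ordinal) (hu : IsUltrametric κ.ord uK)
    (hc : KappaCompact K (ballTopology κ.ord uK) κ) :
    ∃ η : K → cantor κ,
      @Topology.IsEmbedding K (cantor κ) (ballTopology κ.ord uK)
        (ballTopology κ.ord (cantorUltra κ)) η ∧
      IsNowhereDense (Set.range η) :=
  exists_isEmbedding_cantor_isNowhereDense hκ.isRegular hκ.1 hu fun _ hβ =>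
    hu.mk_range_ball_lt hc hβ

theorem stmt17 (κ : Cardinal.{0}) (hκ : WeaklyCompact κ)
    (K : Type u) (uK : K → K → Ordinal) (hu : IsUltrametric κ.ord uK)
    (hc : KappaCompact K (ballTopology κ.ord uK) κ)
    (hw : WeightLE K (ballTopology κ.ord uK) κ) :
    ∃ η : K → cantor κ,
      @Topology.IsEmbedding K (cantor κ) (ballTopology κ.ord uK)
        (ballTopology κ.ord (cantorUltra κ)) η ∧
      IsNowhereDense (Set.range η) :=
  stmt17_general κ hκ K uK hu hc
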